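/- arXiv:1812.10625 — 3 statements merged into one kernel-verified Lean document; each statement's English description precedes it below -/
import Mathlib

section
/- For i.i.d. positive random variables R₁, R₂ with E(R₁⁻¹) < ∞, one has 2·{E((R₁² + R₂²)^{-1/2})}² ≤ {E(R₁⁻¹)}². -/
open MeasureTheory ProbabilityTheory

theorem are_sr_ss_le_one_scalar
    {Ω : Type*} [MeasureSpace Ω] [IsProbabilityMeasure (ℙ : Measure Ω)]
    (R₁ R₂ : Ω → ℝ) (hm₁ : Measurable R₁) (hm₂ : Measurable R₂)
    (hindep : IndepFun R₁ R₂) (hid : IdentDistrib R₁ R₂)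
    (hpos : ∀ᵐ ω, 0 < R₁ ω)
    (hinv : Integrable (fun ω => (R₁ ω)⁻¹)) :
    2 * (∫ ω, (Real.sqrt ((R₁ ω) ^ 2 + (R₂ ω) ^ 2))⁻¹) ^ 2
      ≤ (∫ ω, (R₁ ω)⁻¹) ^ 2 := by
  have hpos₂ : ∀ᵐ ω, 0 < R₂ ω :=
    hid.ae_snd (p := fun x => 0 < x) (measurableSet_lt measurable_const measurable_id) hpos
  have hid' : IdentDistrib (fun ω => (R₁ ω)⁻¹) (fun ω => (R₂ ω)⁻¹) :=
    hid.comp measurable_inv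
  have hinv₂ : Integrable (fun ω => (R₂ ω)⁻¹) :=
    (hid'.integrable_iff).1 hinv
  have hieq : ∫ ω, (R₂ ω)⁻¹ = ∫ ω, (R₁ ω)⁻¹ := (hid'.integral_eq).symm
  -- pointwise bound: (sqrt (a^2+b^2))⁻¹ ≤ (a⁻¹ + b⁻¹) / (2 * sqrt 2)
  have hpt : ∀ᵐ ω, (Real.sqrt ((R₁ ω) ^ 2 + (R₂ ω) ^ 2))⁻¹
      ≤ ((R₁ ω)⁻¹ + (R₂ ω)⁻¹) / (2 * Real.sqrt 2) := by
    filter_upwards [hpos, hpos₂] with ω h1 h2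
    set a := R₁ ω
    set b := R₂ ω
    have hs2 : (0:ℝ) < Real.sqrt 2 := Real.sqrt_pos.2 (by norm_num)
    have hab : 0 < a * b := mul_pos h1 h2
    have key : Real.sqrt 2 * Real.sqrt (a * b) ≤ Real.sqrt (a ^ 2 + b ^ 2) := by
      rw [← Real.sqrt_mul (by norm_num)]
      apply Real.sqrt_le_sqrt
      nlinarith [sq_nonneg (a - b)]
    have hsab : 0 < Real.sqrt (a * b) := Real.sqrt_pos.2 hab
    have h1' : (Real.sqrt ((a) ^ 2 + (b) ^ 2))⁻¹ ≤ (Real.sqrt 2 * Real.sqrt (a * b))⁻¹ := by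
      apply inv_anti₀ (by positivity) key
    refine h1'.trans ?_
    have hmid : (Real.sqrt (a*b))⁻¹ ≤ (a⁻¹ + b⁻¹)/2 := by
      have heq : (Real.sqrt (a*b))⁻¹ = Real.sqrt (a⁻¹ * b⁻¹) := by
        rw [Real.sqrt_mul (le_of_lt (inv_pos.2 h1)), Real.sqrt_inv, Real.sqrt_inv,
          ← mul_inv, ← Real.sqrt_mul h1.le]
      rw [heq]
      have h := Real.sqrt_le_sqrt
        (show a⁻¹ * b⁻¹ ≤ ((a⁻¹ + b⁻¹)/2)^2 by nlinarith [sq_nonneg (a⁻¹ - b⁻¹)])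
      calc Real.sqrt (a⁻¹ * b⁻¹) ≤ Real.sqrt (((a⁻¹ + b⁻¹)/2)^2) := h
        _ = (a⁻¹ + b⁻¹)/2 := Real.sqrt_sq (by positivity)
    calc (Real.sqrt 2 * Real.sqrt (a*b))⁻¹ = (Real.sqrt (a*b))⁻¹ * (Real.sqrt 2)⁻¹ := by
          rw [mul_inv]; ring
      _ ≤ ((a⁻¹ + b⁻¹)/2) * (Real.sqrt 2)⁻¹ :=
          mul_le_mul_of_nonneg_right hmid (by positivity)
      _ = (a⁻¹ + b⁻¹) / (2 * Real.sqrt 2) := by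
          rw [eq_div_iff (by positivity : (2:ℝ) * Real.sqrt 2 ≠ 0)]
          field_simp
  -- integrability of the sqrt-inverse
  have hmf : Measurable fun ω => (Real.sqrt ((R₁ ω) ^ 2 + (R₂ ω) ^ 2))⁻¹ := by
    exact (((hm₁.pow_const 2).add (hm₂.pow_const 2)).sqrt).inv
  have hintf : Integrable (fun ω => (Real.sqrt ((R₁ ω) ^ 2 + (R₂ ω) ^ 2))⁻¹) := by
    refine Integrable.mono' hinv hmf.aestronglyMeasurable ?_
    filter_upwards [hpos, hpos₂] with ω h1 h2
    have hs : R₁ ω ≤ Real.sqrt ((R₁ ω) ^ 2 + (R₂ ω) ^ 2) := by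
      have h := Real.sqrt_le_sqrt
        (show (R₁ ω)^2 ≤ (R₁ ω)^2 + (R₂ ω)^2 by nlinarith [sq_nonneg (R₂ ω)])
      rwa [Real.sqrt_sq h1.le] at h
    rw [Real.norm_eq_abs, abs_of_nonneg (by positivity)]
    exact inv_anti₀ h1 hs
  have hnn : 0 ≤ ∫ ω, (Real.sqrt ((R₁ ω) ^ 2 + (R₂ ω) ^ 2))⁻¹ := by
    apply integral_nonneg_of_ae
    filter_upwards [hpos, hpos₂] with ω h1 h2
    positivity
  have hmono : (∫ ω, (Real.sqrt ((R₁ ω) ^ 2 + (R₂ ω) ^ 2))⁻¹)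
      ≤ ∫ ω, ((R₁ ω)⁻¹ + (R₂ ω)⁻¹) / (2 * Real.sqrt 2) := by
    exact integral_mono_ae hintf (((hinv.add hinv₂).div_const _)) hpt
  have hval : (∫ ω, ((R₁ ω)⁻¹ + (R₂ ω)⁻¹) / (2 * Real.sqrt 2))
      = (∫ ω, (R₁ ω)⁻¹) / Real.sqrt 2 := by
    rw [integral_div, integral_add hinv hinv₂, hieq]
    ring
  rw [hval] at hmono
  have hs2 : Real.sqrt 2 ^ 2 = 2 := Real.sq_sqrt (by norm_num)
  have hs2' : (0:ℝ) < Real.sqrt 2 := Real.sqrt_pos.2 (by norm_num)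
  have hsq := pow_le_pow_left₀ hnn hmono 2
  rw [div_pow, hs2] at hsq
  linarith
end

section
/- For a random vector ε in R^p with E(‖ε‖⁻¹) and E(‖ε‖²) finite and ‖ε‖ > 0 almost surely, {E(‖ε‖⁻¹)}² · E(‖ε‖²) ≥ 1, with equality if and only if ‖ε‖ is almost surely constant. -/
/-!
Write `X = ‖ε‖` and `m = E X`. Integrating the tangent line `x⁻¹ ≥ 2/m - x/m²` of `x ↦ x⁻¹` at `m`
gives `E(X⁻¹) · m ≥ 1`, and `E(X²) = m² + Var X`, so
`E(X⁻¹)² E(X²) = (E(X⁻¹) · m)² + E(X⁻¹)² Var X ≥ 1`,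
with equality only if `Var X = 0`, i.e. `X` is almost surely constant.
-/

open MeasureTheory ProbabilityTheory

lemma two_div_sub_div_sq_le_inv {x m : ℝ} (hx : 0 < x) (hm : m ≠ 0) :
    2 / m - x / m ^ 2 ≤ x⁻¹ := by
  have hgap : x⁻¹ - (2 / m - x / m ^ 2) = (x - m) ^ 2 / (x * m ^ 2) := by
    field_simp
    ring
  have : 0 ≤ (x - m) ^ 2 / (x * m ^ 2) := by positivity
  linarith

namespace MeasureTheory

lemma integral_pos_of_ae_pos {Ω : Type*} [MeasurableSpace Ω] {μ : Measure Ω} [NeZero μ]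
    {X : Ω → ℝ} (hpos : ∀ᵐ ω ∂μ, 0 < X ω) (hX : Integrable X μ) :
    0 < ∫ ω, X ω ∂μ := by
  rw [integral_pos_iff_support_of_nonneg_ae (hpos.mono fun _ h ↦ h.le) hX, pos_iff_ne_zero]
  intro hnull
  obtain ⟨ω, hω, hω0⟩ := (hpos.and (measure_eq_zero_iff_ae_notMem.1 hnull)).exists
  exact hω0 hω.ne'

end MeasureTheory

namespace ProbabilityTheory

variable {Ω : Type*} [MeasurableSpace Ω] {μ : Measure Ω} [IsProbabilityMeasure μ] {X : Ω → ℝ}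

lemma one_le_integral_inv_mul_integral (hpos : ∀ᵐ ω ∂μ, 0 < X ω) (hX : Integrable X μ)
    (hinv : Integrable (fun ω ↦ (X ω)⁻¹) μ) :
    1 ≤ (∫ ω, (X ω)⁻¹ ∂μ) * ∫ ω, X ω ∂μ := by
  set m := ∫ ω, X ω ∂μ
  have hm : 0 < m := integral_pos_of_ae_pos hpos hX
  have htangent : ∫ ω, (2 / m - X ω / m ^ 2) ∂μ ≤ ∫ ω, (X ω)⁻¹ ∂μ :=
    integral_mono_ae ((integrable_const _).sub (hX.div_const _)) hinv
      (hpos.mono fun _ hx ↦ two_div_sub_div_sq_le_inv hx hm.ne')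
  have hmean : ∫ ω, (2 / m - X ω / m ^ 2) ∂μ = m⁻¹ := by
    rw [integral_sub (integrable_const _) (hX.div_const _), integral_const, probReal_univ,
      one_smul, integral_div]
    change 2 / m - m / m ^ 2 = m⁻¹
    field_simp
    ring
  rw [hmean, inv_le_iff_one_le_mul₀ hm] at htangent
  linarith

lemma sq_integral_inv_mul_integral_sq_eq (hX : MemLp X 2 μ) :
    (∫ ω, (X ω)⁻¹ ∂μ) ^ 2 * ∫ ω, X ω ^ 2 ∂μ
      = ((∫ ω, (X ω)⁻¹ ∂μ) * ∫ ω, X ω ∂μ) ^ 2 + (∫ ω, (X ω)⁻¹ ∂μ) ^ 2 * Var[X; μ] := by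
  rw [variance_eq_sub hX]
  simp only [Pi.pow_apply]
  ring

theorem one_le_sq_integral_inv_mul_integral_sq (hpos : ∀ᵐ ω ∂μ, 0 < X ω)
    (hinv : Integrable (fun ω ↦ (X ω)⁻¹) μ) (hX : MemLp X 2 μ) :
    1 ≤ (∫ ω, (X ω)⁻¹ ∂μ) ^ 2 * ∫ ω, X ω ^ 2 ∂μ ∧
      ((∫ ω, (X ω)⁻¹ ∂μ) ^ 2 * ∫ ω, X ω ^ 2 ∂μ = 1 ↔ ∃ c : ℝ, ∀ᵐ ω ∂μ, X ω = c) := by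
  have hAm := one_le_integral_inv_mul_integral hpos (hX.integrable one_le_two) hinv
  have hA : ∫ ω, (X ω)⁻¹ ∂μ ≠ 0 := left_ne_zero_of_mul (zero_lt_one.trans_le hAm).ne'
  have hmean_sq : 1 ≤ ((∫ ω, (X ω)⁻¹ ∂μ) * ∫ ω, X ω ∂μ) ^ 2 := one_le_pow₀ hAm
  have hvar : 0 ≤ (∫ ω, (X ω)⁻¹ ∂μ) ^ 2 * Var[X; μ] :=
    mul_nonneg (sq_nonneg _) (variance_nonneg X μ)
  have hdecomp := sq_integral_inv_mul_integral_sq_eq hX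
  refine ⟨by linarith, fun h ↦ ⟨_, ae_eq_integral_of_variance_eq_zero hX ?_⟩, ?_⟩
  · have : (∫ ω, (X ω)⁻¹ ∂μ) ^ 2 * Var[X; μ] = 0 := by linarith
    exact (mul_eq_zero.1 this).resolve_left (pow_ne_zero 2 hA)
  · rintro ⟨c, hc⟩
    have hc0 : c ≠ 0 := by
      obtain ⟨ω, hω, rfl⟩ := (hpos.and hc).exists
      exact hω.ne'
    rw [integral_congr_ae (hc.mono fun ω hω ↦ congrArg Inv.inv hω),
      integral_congr_ae (hc.mono fun ω hω ↦ congrArg (· ^ 2) hω)]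
    simp [hc0]

end ProbabilityTheory

theorem are_ss_cq_ge_one
    {p : ℕ} {Ω : Type*} [MeasureSpace Ω] [IsProbabilityMeasure (ℙ : Measure Ω)]
    (ε : Ω → EuclideanSpace ℝ (Fin p)) (hm : Measurable ε)
    (hpos : ∀ᵐ ω, 0 < ‖ε ω‖)
    (hinv : Integrable (fun ω => ‖ε ω‖⁻¹))
    (hsq : Integrable (fun ω => ‖ε ω‖ ^ 2)) :
    1 ≤ (∫ ω, ‖ε ω‖⁻¹) ^ 2 * ∫ ω, ‖ε ω‖ ^ 2 ∧
      ((∫ ω, ‖ε ω‖⁻¹) ^ 2 * ∫ ω, ‖ε ω‖ ^ 2 = 1 ↔ ∃ c : ℝ, ∀ᵐ ω, ‖ε ω‖ = c) :=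
  one_le_sq_integral_inv_mul_integral_sq hpos hinv
    ((memLp_two_iff_integrable_sq hm.norm.aestronglyMeasurable).2 hsq)
end

section
/- For i.i.d. random vectors ε₁, ε₂ in R^p with ‖ε₁+ε₂‖ > 0 almost surely and appropriate integrability, 2·{E(‖ε₁+ε₂‖⁻¹)}²·E(‖ε₁‖²) = {E(‖ε₁+ε₂‖⁻¹)}²·E(‖ε₁+ε₂‖²) when E(ε₁) = 0, and this quantity is ≥ 1. -/
open MeasureTheory ProbabilityTheory

theorem are_sr_cq_ge_one
    {p : ℕ} {Ω : Type*} [MeasureSpace Ω] [IsProbabilityMeasure (ℙ : Measure Ω)]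
    (ε₁ ε₂ : Ω → EuclideanSpace ℝ (Fin p)) (hm₁ : Measurable ε₁) (hm₂ : Measurable ε₂)
    (hindep : IndepFun ε₁ ε₂) (hid : IdentDistrib ε₁ ε₂)
    (hint : Integrable ε₁) (hmean : ∫ ω, ε₁ ω = 0)
    (hsq : Integrable (fun ω => ‖ε₁ ω‖ ^ 2))
    (hpos : ∀ᵐ ω, 0 < ‖ε₁ ω + ε₂ ω‖)
    (hinv : Integrable (fun ω => ‖ε₁ ω + ε₂ ω‖⁻¹)) :
    2 * (∫ ω, ‖ε₁ ω + ε₂ ω‖⁻¹) ^ 2 * (∫ ω, ‖ε₁ ω‖ ^ 2)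
        = (∫ ω, ‖ε₁ ω + ε₂ ω‖⁻¹) ^ 2 * (∫ ω, ‖ε₁ ω + ε₂ ω‖ ^ 2) ∧
      1 ≤ 2 * (∫ ω, ‖ε₁ ω + ε₂ ω‖⁻¹) ^ 2 * (∫ ω, ‖ε₁ ω‖ ^ 2) := by
  -- basic integrability
  have hint₂ : Integrable ε₂ := hid.integrable_iff.mp hint
  have hintS : Integrable (fun ω => ε₁ ω + ε₂ ω) := hint.add hint₂
  have hsq₂ : Integrable (fun ω => ‖ε₂ ω‖ ^ 2) :=
    ((hid.comp ((measurable_norm).pow_const 2)).integrable_iff).mp hsq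
  -- component functions
  have hmX : ∀ i : Fin p, Measurable fun ω => ε₁ ω i := fun i =>
    (measurable_pi_apply i).comp (Measurable.comp (WithLp.measurable_ofLp _ _) hm₁)
  have hmY : ∀ i : Fin p, Measurable fun ω => ε₂ ω i := fun i =>
    (measurable_pi_apply i).comp (Measurable.comp (WithLp.measurable_ofLp _ _) hm₂)
  have hXint : ∀ i : Fin p, Integrable fun ω => ε₁ ω i := fun i =>
    ((EuclideanSpace.proj i : EuclideanSpace ℝ (Fin p) →L[ℝ] ℝ)).integrable_comp hint
  have hYint : ∀ i : Fin p, Integrable fun ω => ε₂ ω i := fun i =>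
    ((EuclideanSpace.proj i : EuclideanSpace ℝ (Fin p) →L[ℝ] ℝ)).integrable_comp hint₂
  have hXmean : ∀ i : Fin p, (∫ ω, ε₁ ω i) = 0 := by
    intro i
    have := ((EuclideanSpace.proj i : EuclideanSpace ℝ (Fin p) →L[ℝ] ℝ)).integral_comp_comm hint
    simpa [hmean] using this
  have hindep' : ∀ i : Fin p, IndepFun (fun ω => ε₁ ω i) (fun ω => ε₂ ω i) :=
    fun i => hindep.comp ((measurable_pi_apply i).comp (WithLp.measurable_ofLp _ _))
      ((measurable_pi_apply i).comp (WithLp.measurable_ofLp _ _))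
  have hprod_int : ∀ i : Fin p, Integrable fun ω => ε₁ ω i * ε₂ ω i := fun i =>
    (hindep' i).integrable_mul (hXint i) (hYint i)
  -- inner product expansion
  have hinner_eq : ∀ ω, (inner ℝ (ε₁ ω) (ε₂ ω) : ℝ) = ∑ i, ε₁ ω i * ε₂ ω i := by
    intro ω
    simp [PiLp.inner_apply, RCLike.inner_apply, mul_comm]
  have hinner_int : Integrable fun ω => (inner ℝ (ε₁ ω) (ε₂ ω) : ℝ) := by
    have : Integrable fun ω => ∑ i, ε₁ ω i * ε₂ ω i :=
      integrable_finset_sum _ fun i _ => hprod_int i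
    exact this.congr (Filter.Eventually.of_forall fun ω => (hinner_eq ω).symm)
  have hinner_zero : (∫ ω, (inner ℝ (ε₁ ω) (ε₂ ω) : ℝ)) = 0 := by
    rw [integral_congr_ae (Filter.Eventually.of_forall hinner_eq),
      integral_finset_sum _ fun i _ => hprod_int i]
    refine Finset.sum_eq_zero fun i _ => ?_
    have hm := (hindep' i).integral_mul_eq_mul_integral (hmX i).aestronglyMeasurable (hmY i).aestronglyMeasurable
    rw [hXmean i, zero_mul] at hm
    exact hm
  have hexp : ∀ ω, ‖ε₁ ω + ε₂ ω‖ ^ 2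
      = ‖ε₁ ω‖ ^ 2 + 2 * (inner ℝ (ε₁ ω) (ε₂ ω) : ℝ) + ‖ε₂ ω‖ ^ 2 := fun ω =>
    norm_add_sq_real _ _
  have hsqS : Integrable fun ω => ‖ε₁ ω + ε₂ ω‖ ^ 2 := by
    have h12 : Integrable fun ω => ‖ε₁ ω‖ ^ 2 + 2 * (inner ℝ (ε₁ ω) (ε₂ ω) : ℝ) :=
      hsq.add (hinner_int.const_mul 2)
    have h123 : Integrable fun ω =>
        (‖ε₁ ω‖ ^ 2 + 2 * (inner ℝ (ε₁ ω) (ε₂ ω) : ℝ)) + ‖ε₂ ω‖ ^ 2 := h12.add hsq₂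
    exact h123.congr (Filter.Eventually.of_forall fun ω => (hexp ω).symm)
  have hE2 : (∫ ω, ‖ε₂ ω‖ ^ 2) = ∫ ω, ‖ε₁ ω‖ ^ 2 :=
    ((hid.comp ((measurable_norm).pow_const 2)).integral_eq).symm
  have hEsq : (∫ ω, ‖ε₁ ω + ε₂ ω‖ ^ 2) = 2 * ∫ ω, ‖ε₁ ω‖ ^ 2 := by
    have h2i : Integrable fun ω => 2 * (inner ℝ (ε₁ ω) (ε₂ ω) : ℝ) := hinner_int.const_mul 2
    have h12 : Integrable fun ω => ‖ε₁ ω‖ ^ 2 + 2 * (inner ℝ (ε₁ ω) (ε₂ ω) : ℝ) :=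
      hsq.add h2i
    rw [integral_congr_ae (Filter.Eventually.of_forall hexp), integral_add h12 hsq₂,
      integral_add hsq h2i, integral_const_mul, hinner_zero, hE2]
    ring
  -- positivity of the two integrals
  have hpos_int : ∀ f : Ω → ℝ, Integrable f → (∀ᵐ ω, 0 < f ω) → 0 < ∫ ω, f ω := by
    intro f hfi hf
    rw [integral_pos_iff_support_of_nonneg_ae (hf.mono fun ω h => h.le) hfi]
    have hsub : ∀ᵐ ω, ω ∈ Set.univ → ω ∈ Function.support f :=
      hf.mono fun ω h _ => h.ne'
    calc (0 : ENNReal) < ℙ Set.univ := by simp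
      _ ≤ ℙ (Function.support f) := measure_mono_ae hsub
  have hA_pos : 0 < ∫ ω, ‖ε₁ ω + ε₂ ω‖⁻¹ :=
    hpos_int _ hinv (hpos.mono fun ω h => inv_pos.mpr h)
  have hgint : Integrable fun ω => ‖ε₁ ω + ε₂ ω‖ := hintS.norm
  have hB_pos : 0 < ∫ ω, ‖ε₁ ω + ε₂ ω‖ := hpos_int _ hgint hpos
  set A := ∫ ω, ‖ε₁ ω + ε₂ ω‖⁻¹ with hA
  set B := ∫ ω, ‖ε₁ ω + ε₂ ω‖ with hB
  -- Cauchy–Schwarz: 1 ≤ A * B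
  have hAB : 1 ≤ A * B := by
    set r := Real.sqrt (A * B) with hr
    have hr2 : r ^ 2 = A * B := Real.sq_sqrt (by positivity)
    have hrpos : 0 < r := Real.sqrt_pos.mpr (by positivity)
    have hpt : ∀ᵐ ω, 2 * r ≤ B * ‖ε₁ ω + ε₂ ω‖⁻¹ + A * ‖ε₁ ω + ε₂ ω‖ := by
      refine hpos.mono fun ω h => ?_
      have hfg : ‖ε₁ ω + ε₂ ω‖⁻¹ * ‖ε₁ ω + ε₂ ω‖ = 1 := inv_mul_cancel₀ h.ne'
      have hfpos : 0 < ‖ε₁ ω + ε₂ ω‖⁻¹ := inv_pos.mpr h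
      set f := ‖ε₁ ω + ε₂ ω‖⁻¹ with hfdef
      set g := ‖ε₁ ω + ε₂ ω‖ with hgdef
      have key : 0 ≤ B * f ^ 2 - 2 * r * f + A := by
        nlinarith [sq_nonneg (B * f - r), hB_pos, hr2]
      have hAfg : A * (f * g) = A := by rw [hfg, mul_one]
      nlinarith [key, hAfg, hfpos, mul_pos hfpos hB_pos]
    have hint_rhs : Integrable fun ω => B * ‖ε₁ ω + ε₂ ω‖⁻¹ + A * ‖ε₁ ω + ε₂ ω‖ :=
      (hinv.const_mul B).add (hgint.const_mul A)
    have h2r : 2 * r ≤ ∫ ω, (B * ‖ε₁ ω + ε₂ ω‖⁻¹ + A * ‖ε₁ ω + ε₂ ω‖) := by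
      have := integral_mono_ae (integrable_const (2 * r)) hint_rhs hpt
      simpa using this
    rw [integral_add (hinv.const_mul B) (hgint.const_mul A), integral_const_mul,
      integral_const_mul] at h2r
    nlinarith [h2r, hr2, hrpos]
  -- second moment bound: B ^ 2 ≤ ∫ ‖S‖ ^ 2
  have hB2 : B ^ 2 ≤ ∫ ω, ‖ε₁ ω + ε₂ ω‖ ^ 2 := by
    have hmem : MemLp (fun ω => ‖ε₁ ω + ε₂ ω‖) 2 ℙ :=
      (memLp_two_iff_integrable_sq
        (hm₁.add hm₂).norm.aestronglyMeasurable).mpr hsqS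
    have hv := variance_nonneg (fun ω => ‖ε₁ ω + ε₂ ω‖) ℙ
    rw [variance_eq_sub hmem] at hv
    simp only [Pi.pow_apply] at hv
    linarith
  constructor
  · rw [hEsq]; ring
  · nlinarith [hAB, hB2, sq_nonneg A, hA_pos, hB_pos, hEsq, mul_pos hA_pos hA_pos]
end
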